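/- Let G = (V,E) be a finite simple graph on V = {1,…,n} with n ≥ 1. Then the stability number α(G) equals the supremum of ⟨J_{n×n}, X⟩ over all X with X ∈ CTH²(G) and X ∈ STAB²(G), where J_{n×n} is the n×n all-ones matrix; moreover this supremum is attained. -/

import Mathlib

/-! On a generator `s sᵀ` of `STAB²(G)` one has
`⟨J, s sᵀ⟩ = (1ᵀs)² ≤ α(G) · 1ᵀs = α(G) · trace (s sᵀ)`. This inequality is linear in the matrix, so it holds on all of `STAB²(G)`, and `trace X = 1`
gives `⟨J, X⟩ ≤ α(G)`. For a maximum stable set `s` the bound is attained by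
`X = α(G)⁻¹ s sᵀ`, which lies in `STAB²(G)` as a convex combination of `s sᵀ` and `0`
because `α(G) ≥ 1`. -/

open Matrix

noncomputable section

/-- A stable set vector of a graph `G`: a 0/1 vector with `s i * s j = 0` on edges. -/
def IsStableVec {V : Type*} (G : SimpleGraph V) (s : V → ℝ) : Prop :=
  (∀ i, s i = 0 ∨ s i = 1) ∧ ∀ i j, G.Adj i j → s i * s j = 0

/-- The squared stable set polytope `STAB²(G) = conv{ s sᵀ : s ∈ S(G) }`. -/
def stab2 {V : Type*} (G : SimpleGraph V) : Set (Matrix V V ℝ) :=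
  convexHull ℝ { M | ∃ s, IsStableVec G s ∧ M = Matrix.vecMulVec s s }

/-- The scaled squared stable set polytope
`SSTAB²(G) = conv({ (1/(sᵀs)) s sᵀ : s ∈ S(G), s ≠ 0 } ∪ {0})`. -/
def sstab2 {V : Type*} [Fintype V] (G : SimpleGraph V) : Set (Matrix V V ℝ) :=
  convexHull ℝ
    ({ M | ∃ s, IsStableVec G s ∧ s ≠ 0 ∧
        M = (∑ k, s k * s k)⁻¹ • Matrix.vecMulVec s s } ∪ {(0 : Matrix V V ℝ)})

/-- The feasible region `TH²(G)` of the SDP (Tn+1): pairs `(x, X)` with `X` symmetric,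
`diag X = x`, `X i j = 0` on edges and `X - x xᵀ` positive semidefinite. -/
def th2 {n : ℕ} (G : SimpleGraph (Fin n)) :
    Set ((Fin n → ℝ) × Matrix (Fin n) (Fin n) ℝ) :=
  { p | p.2.IsSymm ∧ (∀ i, p.2 i i = p.1 i) ∧
      (∀ i j, G.Adj i j → p.2 i j = 0) ∧ (p.2 - Matrix.vecMulVec p.1 p.1).PosSemidef }

/-- The feasible region `CTH²(G)` of the SDP (Tn): symmetric PSD matrices with trace 1
vanishing on edges. -/
def cth2 {n : ℕ} (G : SimpleGraph (Fin n)) : Set (Matrix (Fin n) (Fin n) ℝ) :=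
  { X | X.IsSymm ∧ X.trace = 1 ∧ (∀ i j, G.Adj i j → X i j = 0) ∧ X.PosSemidef }

/-- The principal submatrix `X_I` of `X` indexed by `I`. -/
def subMat {n : ℕ} (X : Matrix (Fin n) (Fin n) ℝ) (I : Finset (Fin n)) :
    Matrix (I : Set (Fin n)) (I : Set (Fin n)) ℝ :=
  X.submatrix Subtype.val Subtype.val

/-- The exact subgraph constraint (ESC) for the subgraph of `G` induced by `I`. -/
def escFeas {n : ℕ} (G : SimpleGraph (Fin n)) (X : Matrix (Fin n) (Fin n) ℝ)
    (I : Finset (Fin n)) : Prop :=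
  subMat X I ∈ stab2 (G.induce (I : Set (Fin n)))

/-- The scaled exact subgraph constraint (SESC) for the subgraph of `G` induced by `I`. -/
def sescFeas {n : ℕ} (G : SimpleGraph (Fin n)) (X : Matrix (Fin n) (Fin n) ℝ)
    (I : Finset (Fin n)) : Prop :=
  subMat X I ∈ sstab2 (G.induce (I : Set (Fin n)))

/-- `z^E_J(G)`: optimal value of (Tn+1) with the ESCs for all `I ∈ J`. -/
def zE {n : ℕ} (G : SimpleGraph (Fin n)) (J : Set (Finset (Fin n))) : ℝ :=
  sSup { r | ∃ x X, (x, X) ∈ th2 G ∧ (∀ I ∈ J, escFeas G X I) ∧ r = ∑ i, x i }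

/-- `z^C_J(G)`: optimal value of (Tn) with the ESCs for all `I ∈ J`. -/
def zC {n : ℕ} (G : SimpleGraph (Fin n)) (J : Set (Finset (Fin n))) : ℝ :=
  sSup { r | ∃ X, X ∈ cth2 G ∧ (∀ I ∈ J, escFeas G X I) ∧ r = ∑ i, ∑ j, X i j }

/-- `z^S_J(G)`: optimal value of (Tn) with the SESCs for all `I ∈ J`. -/
def zS {n : ℕ} (G : SimpleGraph (Fin n)) (J : Set (Finset (Fin n))) : ℝ :=
  sSup { r | ∃ X, X ∈ cth2 G ∧ (∀ I ∈ J, sescFeas G X I) ∧ r = ∑ i, ∑ j, X i j }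

/-- The collection `J_k` of all vertex subsets of cardinality `k`. -/
def Jk (n k : ℕ) : Set (Finset (Fin n)) := { I | I.card = k }

namespace IsStableVec

variable {V : Type*} {G : SimpleGraph V} {s : V → ℝ}

lemma zero : IsStableVec G 0 :=
  ⟨fun _ => Or.inl rfl, fun _ _ _ => zero_mul _⟩

lemma single [DecidableEq V] (v : V) : IsStableVec G (Pi.single v 1) := by
  refine ⟨fun i => ?_, fun i j hij => ?_⟩
  · by_cases h : i = v <;> simp [h]
  · by_cases h : i = v
    · subst h; simp [(G.ne_of_adj hij).symm]
    · simp [h]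

lemma mul_self (hs : IsStableVec G s) (i : V) : s i * s i = s i := by
  rcases hs.1 i with h | h <;> simp [h]

lemma nonneg (hs : IsStableVec G s) (i : V) : 0 ≤ s i := by
  rcases hs.1 i with h | h <;> simp [h]

lemma trace_vecMulVec [Fintype V] (hs : IsStableVec G s) :
    (vecMulVec s s).trace = ∑ i, s i := by
  simp only [Matrix.trace_vecMulVec, dotProduct, hs.mul_self]

end IsStableVec

section

variable {V : Type*} [Fintype V]

lemma sum_sum_vecMulVec {R : Type*} [Semiring R] (u v : V → R) :
    ∑ i, ∑ j, vecMulVec u v i j = (∑ i, u i) * ∑ j, v j := by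
  simp only [vecMulVec_apply, Fintype.sum_mul_sum]

lemma convex_setOf_sum_sum_le_mul_trace (a : ℝ) :
    Convex ℝ {M : Matrix V V ℝ | ∑ i, ∑ j, M i j ≤ a * M.trace} := by
  have h : Convex ℝ {M : Matrix V V ℝ | ∑ i, ∑ j, M i j - a * M.trace ≤ 0} := by
    refine convex_halfSpace_le ⟨fun M N => ?_, fun c M => ?_⟩ 0
    · simp only [Matrix.add_apply, Finset.sum_add_distrib, trace_add]; ring
    · simp only [Matrix.smul_apply, smul_eq_mul, ← Finset.mul_sum, trace_smul]; ring
  simpa only [sub_nonpos] using h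

theorem sum_sum_le_mul_trace_of_mem_stab2 {G : SimpleGraph V} {a : ℝ}
    (ha : ∀ s, IsStableVec G s → ∑ i, s i ≤ a) {X : Matrix V V ℝ} (hX : X ∈ stab2 G) :
    ∑ i, ∑ j, X i j ≤ a * X.trace := by
  refine convexHull_min ?_ (convex_setOf_sum_sum_le_mul_trace a) hX
  rintro _ ⟨s, hs, rfl⟩
  rw [Set.mem_ofPred_eq, sum_sum_vecMulVec, hs.trace_vecMulVec]
  exact mul_le_mul_of_nonneg_right (ha s hs) (Finset.sum_nonneg fun i _ => hs.nonneg i)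

end

theorem smul_vecMulVec_mem_stab2 {V : Type*} {G : SimpleGraph V} {s : V → ℝ}
    (hs : IsStableVec G s) {c : ℝ} (hc₀ : 0 ≤ c) (hc₁ : c ≤ 1) : c • vecMulVec s s ∈ stab2 G := by
  have hss : vecMulVec s s ∈ stab2 G := subset_convexHull ℝ _ ⟨s, hs, rfl⟩
  have h0 : (0 : Matrix V V ℝ) ∈ stab2 G := subset_convexHull ℝ _ ⟨0, .zero, by simp⟩
  have hconv : Convex ℝ (stab2 G) := convex_convexHull ℝ _
  simpa using hconv hss h0 hc₀ (sub_nonneg.2 hc₁) (add_sub_cancel c 1)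

theorem inv_smul_vecMulVec_mem_cth2 {n : ℕ} {G : SimpleGraph (Fin n)} {s : Fin n → ℝ}
    (hs : IsStableVec G s) (h : ∑ i, s i ≠ 0) :
    (∑ i, s i)⁻¹ • vecMulVec s s ∈ cth2 G := by
  have hpsd : ((∑ i, s i)⁻¹ • vecMulVec s s).PosSemidef :=
    (posSemidef_vecMulVec_self_star s).smul
      (inv_nonneg.2 (Finset.sum_nonneg fun i _ => hs.nonneg i))
  refine ⟨isHermitian_iff_isSymm.1 hpsd.isHermitian, ?_, fun i j hij => ?_, hpsd⟩
  · rw [trace_smul, hs.trace_vecMulVec, smul_eq_mul, inv_mul_cancel₀ h]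
  · simp [vecMulVec_apply, hs.2 i j hij]

/-- `α(G)` equals the (attained) supremum of `⟨J_{n×n}, X⟩` over
`X ∈ CTH²(G)` with `X ∈ STAB²(G)`. -/
theorem stmt4 {n : ℕ} (hn : 1 ≤ n) (G : SimpleGraph (Fin n)) (a : ℝ)
    (ha : IsGreatest { r | ∃ s, IsStableVec G s ∧ r = ∑ i, s i } a) :
    IsGreatest { r | ∃ X, X ∈ cth2 G ∧ X ∈ stab2 G ∧ r = ∑ i, ∑ j, X i j } a := by
  obtain ⟨⟨s, hs, rfl⟩, hub⟩ := ha
  have hmax : ∀ t, IsStableVec G t → ∑ i, t i ≤ ∑ i, s i := fun t ht => hub ⟨t, ht, rfl⟩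
  have hone : 1 ≤ ∑ i, s i := by
    simpa using hmax _ (IsStableVec.single (G := G) ⟨0, hn⟩)
  have hpos : 0 < ∑ i, s i := zero_lt_one.trans_le hone
  refine ⟨⟨_, inv_smul_vecMulVec_mem_cth2 hs hpos.ne',
    smul_vecMulVec_mem_stab2 hs (inv_nonneg.2 hpos.le) (inv_le_one_of_one_le₀ hone), ?_⟩, ?_⟩
  · simp only [Matrix.smul_apply, smul_eq_mul, ← Finset.mul_sum, sum_sum_vecMulVec]
    field_simp
  · rintro r ⟨X, hX, hXs, rfl⟩
    simpa [hX.2.1] using sum_sum_le_mul_trace_of_mem_stab2 hmax hXs
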